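/- arXiv:2405.08902 — 4 statements merged into one kernel-verified Lean document; each statement's English description precedes it below -/
import Mathlib

section
/- The radial profile t ↦ |g°(te^{iτ})| = ((r^j R - r^{2j})/(1 - r^{2j})) t^{-j} + ((1 - r^j R)/(1 - r^{2j})) t^j is nondecreasing on [1, r] if and only if the Nitsche-type bound R ≥ (1/2) r^{-j}(1 + r^{2j}) holds. -/
/-!
Write the profile as `G t = a / t ^ j + b * t ^ j`. Then
`G t - G s = (t ^ j - s ^ j) * (b - a / (s ^ j * t ^ j))`, and for `1 ≤ s ≤ t` the second
factor is nonnegative as soon as `0 ≤ b` and `a ≤ b`; conversely, letting `s = 1` and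
`t → 1⁺` shows that monotonicity forces `a ≤ b`. With `u = r ^ j`, clearing the negative
denominator `1 - u ^ 2` turns `a ≤ b` into `1 + u ^ 2 ≤ 2 * u * R`, the Nitsche-type bound,
which in turn gives `u * R > 1`, i.e. `b ≥ 0`.
-/

open Set Filter Topology

lemma div_add_mul_sub_div_add_mul {x y : ℝ} (hx : x ≠ 0) (hy : y ≠ 0) (a b : ℝ) :
    (a / y + b * y) - (a / x + b * x) = (y - x) * (b - a / (x * y)) := by
  field_simp
  ring

lemma monotoneOn_mul_zpow_neg_add_mul_zpow {a b : ℝ} (hb : 0 ≤ b) (hab : a ≤ b) (n : ℕ) :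
    MonotoneOn (fun t : ℝ => a * t ^ (-(n : ℤ)) + b * t ^ (n : ℤ)) (Ici 1) := by
  intro s hs t ht hst
  have hs0 : 0 < s := zero_lt_one.trans_le hs
  have hst1 : 1 ≤ s ^ n * t ^ n :=
    one_le_mul_of_one_le_of_one_le (one_le_pow₀ hs) (one_le_pow₀ ht)
  have hfactor : a / (s ^ n * t ^ n) ≤ b := by
    rcases le_or_gt a 0 with ha | ha
    · exact (div_nonpos_of_nonpos_of_nonneg ha (by positivity)).trans hb
    · exact (div_le_self ha.le hst1).trans hab
  have key := div_add_mul_sub_div_add_mul (pow_ne_zero n hs0.ne')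
    (pow_ne_zero n (hs0.trans_le hst).ne') a b
  have := mul_nonneg (sub_nonneg.2 (pow_le_pow_left₀ hs0.le hst n)) (sub_nonneg.2 hfactor)
  simp only [zpow_neg, zpow_natCast, ← div_eq_mul_inv]
  linarith

lemma le_of_monotoneOn_mul_zpow_neg_add_mul_zpow {a b r : ℝ} {n : ℕ} (hn : n ≠ 0)
    (hr : 1 < r)
    (h : MonotoneOn (fun t : ℝ => a * t ^ (-(n : ℤ)) + b * t ^ (n : ℤ)) (Icc 1 r)) :
    a ≤ b := by
  have hlim : Tendsto (fun t : ℝ => a / t ^ n) (𝓝[>] 1) (𝓝 a) := by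
    have : ContinuousAt (fun t : ℝ => a / t ^ n) 1 := by fun_prop (disch := norm_num)
    simpa using this.tendsto.mono_left nhdsWithin_le_nhds
  refine le_of_tendsto hlim ?_
  filter_upwards [Ioc_mem_nhdsGT hr] with t ⟨ht1, htr⟩
  have hmono := h ⟨le_rfl, hr.le⟩ ⟨ht1.le, htr⟩ ht1.le
  have key :=
    div_add_mul_sub_div_add_mul one_ne_zero (pow_ne_zero n (zero_lt_one.trans ht1).ne') a b
  simp only [zpow_neg, zpow_natCast, one_pow, inv_one, ← div_eq_mul_inv, div_one, one_mul,
    mul_one] at hmono key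
  have hprod : 0 ≤ (t ^ n - 1) * (b - a / t ^ n) := by linarith
  exact sub_nonneg.1 ((mul_nonneg_iff_of_pos_left (sub_pos.2 (one_lt_pow₀ ht1 hn))).1 hprod)

lemma nitsche_bound_eq {u : ℝ} (hu : u ≠ 0) :
    1 / 2 * u⁻¹ * (1 + u ^ 2) = (1 + u ^ 2) / (2 * u) := by
  field_simp

lemma nitsche_coeff_le_iff {u : ℝ} (hu : 1 < u) (R : ℝ) :
    (u * R - u ^ 2) / (1 - u ^ 2) ≤ (1 - u * R) / (1 - u ^ 2) ↔
      1 / 2 * u⁻¹ * (1 + u ^ 2) ≤ R := by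
  have hD : 1 - u ^ 2 < 0 := by nlinarith
  rw [div_le_div_right_of_neg hD, nitsche_bound_eq (by positivity), div_le_iff₀ (by positivity)]
  constructor <;> intro h <;> linarith

lemma nitsche_coeff_nonneg {u R : ℝ} (hu : 1 < u) (hR : 1 / 2 * u⁻¹ * (1 + u ^ 2) ≤ R) :
    0 ≤ (1 - u * R) / (1 - u ^ 2) := by
  rw [nitsche_bound_eq (by positivity), div_le_iff₀ (by positivity)] at hR
  exact div_nonneg_of_nonpos (by nlinarith) (by nlinarith)

/- The radial profile G(t) = ((r^jR - r^{2j})/(1-r^{2j})) t^{-j}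
+ ((1 - r^jR)/(1-r^{2j})) t^j is nondecreasing on [1,r] iff the Nitsche-type
bound R ≥ (1/2) r^{-j} (1 + r^{2j}) holds. -/
theorem stmt4_general (j : ℕ) (hj : 0 < j) (r R : ℝ) (hr : 1 < r) :
    MonotoneOn (fun t : ℝ =>
        (r ^ j * R - r ^ (2 * j)) / (1 - r ^ (2 * j)) * t ^ (-(j : ℤ))
          + (1 - r ^ j * R) / (1 - r ^ (2 * j)) * t ^ (j : ℤ)) (Set.Icc 1 r)
      ↔ R ≥ (1 / 2) * r ^ (-(j : ℤ)) * (1 + r ^ (2 * j)) := by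
  have hu : 1 < r ^ j := one_lt_pow₀ hr hj.ne'
  rw [pow_mul', zpow_neg, zpow_natCast, ge_iff_le, ← nitsche_coeff_le_iff hu]
  refine ⟨le_of_monotoneOn_mul_zpow_neg_add_mul_zpow hj.ne' hr, fun hab => ?_⟩
  have hb := nitsche_coeff_nonneg hu ((nitsche_coeff_le_iff hu R).1 hab)
  exact (monotoneOn_mul_zpow_neg_add_mul_zpow hb hab j).mono Icc_subset_Ici_self

theorem stmt4 (j : ℕ) (hj : 0 < j) (r R : ℝ) (hr : 1 < r) (hR : 1 < R) :
    MonotoneOn (fun t : ℝ =>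
        (r ^ j * R - r ^ (2 * j)) / (1 - r ^ (2 * j)) * t ^ (-(j : ℤ))
          + (1 - r ^ j * R) / (1 - r ^ (2 * j)) * t ^ (j : ℤ)) (Set.Icc 1 r)
      ↔ R ≥ (1 / 2) * r ^ (-(j : ℤ)) * (1 + r ^ (2 * j)) :=
  stmt4_general j hj r R hr
end

section
/- For the radial harmonic map g°(z) with profile G, the constant c₁ := t²G'(t)² − j²G(t)² is independent of t and equals 4j²(1 + R² − R(r^j + r^{-j}))/(r^j − r^{-j})², where G(t) = ((r^j R − r^{2j})/(1 − r^{2j})) t^{-j} + ((1 − r^j R)/(1 − r^{2j})) t^j. -/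
/- Writing G(t) = A t^{-j} + B t^j, one has t G'(t) = j (B t^j - A t^{-j}), so
t²G'² - j²G² = j²((B t^j - A t^{-j})² - (B t^j + A t^{-j})²) = -4j²AB is constant.
With v = r^j the coefficients are A = v(R - v)/(1 - v²) and B = (1 - vR)/(1 - v²), and
-4AB is the stated constant. In the degenerate cases v = 0 and v² = 1 both sides are 0,
by the convention x / 0 = 0. -/

theorem mul_deriv_zpow_neg_add_zpow (A B : ℝ) (n : ℤ) {t : ℝ} (ht : t ≠ 0) :
    t * deriv (fun t' : ℝ => A * t' ^ (-n) + B * t' ^ n) t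
      = n * (B * t ^ n - A * t ^ (-n)) := by
  have hderiv : HasDerivAt (fun t' : ℝ => A * t' ^ (-n) + B * t' ^ n)
      (A * ((-n : ℤ) * t ^ (-n - 1)) + B * (n * t ^ (n - 1))) t :=
    ((hasDerivAt_zpow (-n) t (Or.inl ht)).const_mul A).add
      ((hasDerivAt_zpow n t (Or.inl ht)).const_mul B)
  rw [hderiv.deriv, zpow_sub_one₀ ht, zpow_sub_one₀ ht]
  field_simp
  push_cast
  ring

theorem sq_mul_deriv_sq_sub_sq_zpow_neg_add_zpow (A B : ℝ) (n : ℤ) {t : ℝ} (ht : t ≠ 0) :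
    t ^ 2 * (deriv (fun t' : ℝ => A * t' ^ (-n) + B * t' ^ n) t) ^ 2
        - (n : ℝ) ^ 2 * (A * t ^ (-n) + B * t ^ n) ^ 2
      = -4 * (n : ℝ) ^ 2 * A * B := by
  have hinv : t ^ (-n) * t ^ n = 1 := by
    rw [zpow_neg, inv_mul_cancel₀ (zpow_ne_zero n ht)]
  rw [← mul_pow, mul_deriv_zpow_neg_add_zpow A B n ht]
  linear_combination (-4 * (n : ℝ) ^ 2 * A * B) * hinv

theorem neg_four_mul_radial_coefficients (v R : ℝ) :
    -(4 * ((v * R - v ^ 2) / (1 - v ^ 2)) * ((1 - v * R) / (1 - v ^ 2)))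
      = 4 * (1 + R ^ 2 - R * (v + v⁻¹)) / (v - v⁻¹) ^ 2 := by
  rcases eq_or_ne v 0 with rfl | hv
  · simp
  rcases eq_or_ne (v ^ 2) 1 with hv2 | hv2
  · have hvinv : v⁻¹ = v := by
      rw [inv_eq_of_mul_eq_one_right (by rwa [← sq])]
    simp [hv2, hvinv]
  have hsub : v - v⁻¹ ≠ 0 := by
    intro h
    apply hv2
    field_simp at h
    linear_combination h
  have hsub' : 1 - v ^ 2 ≠ 0 := sub_ne_zero.mpr (Ne.symm hv2)
  field_simp
  ring

theorem stmt8_general (j : ℕ) (r R : ℝ) :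
    ∀ t ∈ Set.Ioi (0 : ℝ),
      t ^ 2 * (deriv (fun t' : ℝ =>
          (r ^ j * R - r ^ (2 * j)) / (1 - r ^ (2 * j)) * t' ^ (-(j : ℤ))
            + (1 - r ^ j * R) / (1 - r ^ (2 * j)) * t' ^ (j : ℤ)) t) ^ 2
        - (j ^ 2 : ℝ) *
          ((r ^ j * R - r ^ (2 * j)) / (1 - r ^ (2 * j)) * t ^ (-(j : ℤ))
            + (1 - r ^ j * R) / (1 - r ^ (2 * j)) * t ^ (j : ℤ)) ^ 2
      = 4 * (j ^ 2 : ℝ) * (1 + R ^ 2 - R * (r ^ j + r ^ (-(j : ℤ))))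
          / (r ^ j - r ^ (-(j : ℤ))) ^ 2 := by
  intro t ht
  have hfirst := sq_mul_deriv_sq_sub_sq_zpow_neg_add_zpow
    ((r ^ j * R - r ^ (2 * j)) / (1 - r ^ (2 * j))) ((1 - r ^ j * R) / (1 - r ^ (2 * j)))
    j (ne_of_gt ht)
  rw [Int.cast_natCast] at hfirst
  rw [hfirst, zpow_neg, zpow_natCast, pow_mul']
  linear_combination (j : ℝ) ^ 2 * neg_four_mul_radial_coefficients (r ^ j) R

theorem stmt8 (j : ℕ) (hj : 0 < j) (r R : ℝ) (hr : 1 < r) (hR : 1 < R) :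
    ∀ t ∈ Set.Ioi (0 : ℝ),
      t ^ 2 * (deriv (fun t' : ℝ =>
          (r ^ j * R - r ^ (2 * j)) / (1 - r ^ (2 * j)) * t' ^ (-(j : ℤ))
            + (1 - r ^ j * R) / (1 - r ^ (2 * j)) * t' ^ (j : ℤ)) t) ^ 2
        - (j ^ 2 : ℝ) *
          ((r ^ j * R - r ^ (2 * j)) / (1 - r ^ (2 * j)) * t ^ (-(j : ℤ))
            + (1 - r ^ j * R) / (1 - r ^ (2 * j)) * t ^ (j : ℤ)) ^ 2
      = 4 * (j ^ 2 : ℝ) * (1 + R ^ 2 - R * (r ^ j + r ^ (-(j : ℤ))))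
          / (r ^ j - r ^ (-(j : ℤ))) ^ 2 :=
  stmt8_general j r R
end

section
/- The Dirichlet energy of the j-degree radial harmonic map g° on A(1,r), given by E[g°] = ∫_{A(1,r)} |Dg°|² dx dy, equals 4πj² ∫₁^r G(t)²/t dt + 2πc₁ log r, where G is the radial profile and c₁ = t²G'(t)² − j²G(t)². -/
/-! Writing `t |Dg°|² = (j² G² + t² G'²) / t = 2 j² G² / t + (t² G'² - j² G²) / t`, the second
term is `c₁ / t`, whose integral over `[1, r]` is `c₁ log r`. -/

open intervalIntegral Set

theorem integral_mul_add_eq_of_sq_mul_sub_eq_const {a b k c : ℝ} {A B : ℝ → ℝ}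
    (ha : 0 < a) (hab : a ≤ b)
    (hA : IntervalIntegrable (fun t => A t / t) MeasureTheory.volume a b)
    (hc : ∀ t ∈ Icc a b, t ^ 2 * B t - k * A t = c) :
    ∫ t in a..b, t * (k * A t / t ^ 2 + B t)
      = 2 * k * (∫ t in a..b, A t / t) + c * Real.log (b / a) := by
  have hzero : (0 : ℝ) ∉ uIcc a b := by
    rw [uIcc_of_le hab]
    exact fun h => (ha.trans_le h.1).false
  have hsplit : EqOn (fun t => t * (k * A t / t ^ 2 + B t))
      (fun t => 2 * k * (A t / t) + c * t⁻¹) (uIcc a b) := by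
    intro t ht
    rw [uIcc_of_le hab] at ht
    have ht0 : t ≠ 0 := (ha.trans_le ht.1).ne'
    rw [← hc t ht]
    field_simp
    ring
  have hinv : IntervalIntegrable (fun t : ℝ => t⁻¹) MeasureTheory.volume a b :=
    intervalIntegrable_inv (fun t ht => ne_of_mem_of_not_mem ht hzero) continuousOn_id
  rw [integral_congr hsplit, integral_add (hA.const_mul _) (hinv.const_mul _),
    integral_const_mul, integral_const_mul, integral_inv hzero]

theorem stmt10_general (j : ℕ) (r R c₁ : ℝ) (hr : 1 < r)
    (G : ℝ → ℝ)
    (hG : G = fun t : ℝ =>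
      (r ^ j * R - r ^ (2 * j)) / (1 - r ^ (2 * j)) * t ^ (-(j : ℤ))
        + (1 - r ^ j * R) / (1 - r ^ (2 * j)) * t ^ (j : ℤ))
    (hc : ∀ t ∈ Set.Icc (1 : ℝ) r,
      t ^ 2 * (deriv G t) ^ 2 - (j ^ 2 : ℝ) * G t ^ 2 = c₁) :
    (∫ t in (1 : ℝ)..r,
        2 * Real.pi * t * ((j ^ 2 : ℝ) * G t ^ 2 / t ^ 2 + (deriv G t) ^ 2))
      = 4 * Real.pi * (j ^ 2 : ℝ) * (∫ t in (1 : ℝ)..r, G t ^ 2 / t)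
        + 2 * Real.pi * c₁ * Real.log r := by
  have hpos : uIcc 1 r ⊆ Ioi (0 : ℝ) := by
    rw [uIcc_of_le hr.le]
    exact fun t ht => one_pos.trans_le ht.1
  have hG_cont : ContinuousOn G (Ioi 0) := by
    intro t (ht : 0 < t)
    rw [hG]
    exact ContinuousAt.continuousWithinAt (by fun_prop (disch := exact Or.inl ht.ne'))
  have hint : IntervalIntegrable (fun t => G t ^ 2 / t) MeasureTheory.volume 1 r :=
    ((hG_cont.mono hpos).pow 2 |>.div continuousOn_id
      fun t ht => (hpos ht).ne').intervalIntegrable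
  simp_rw [mul_assoc (2 * Real.pi)]
  rw [integral_const_mul, integral_mul_add_eq_of_sq_mul_sub_eq_const one_pos hr.le hint hc,
    div_one]
  ring

open intervalIntegral in
theorem stmt10 (j : ℕ) (hj : 0 < j) (r R c₁ : ℝ) (hr : 1 < r) (hR : 1 < R)
    (G : ℝ → ℝ)
    (hG : G = fun t : ℝ =>
      (r ^ j * R - r ^ (2 * j)) / (1 - r ^ (2 * j)) * t ^ (-(j : ℤ))
        + (1 - r ^ j * R) / (1 - r ^ (2 * j)) * t ^ (j : ℤ))
    (hc : ∀ t ∈ Set.Icc (1 : ℝ) r,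
      t ^ 2 * (deriv G t) ^ 2 - (j ^ 2 : ℝ) * G t ^ 2 = c₁) :
    (∫ t in (1 : ℝ)..r,
        2 * Real.pi * t * ((j ^ 2 : ℝ) * G t ^ 2 / t ^ 2 + (deriv G t) ^ 2))
      = 4 * Real.pi * (j ^ 2 : ℝ) * (∫ t in (1 : ℝ)..r, G t ^ 2 / t)
        + 2 * Real.pi * c₁ * Real.log r :=
  stmt10_general j r R c₁ hr G hG hc
end

section
/- Suppose r > (R + √(R² − 1))^{1/j} and set r₀ = (R + √(R² − 1))^{1/j}, ρ = r₀/r. Define g⋄ on A(ρ, r₀) by g⋄(z) = g°(z) for 1 ≤ |z| < r₀ and g⋄(z) = z^j/|z|^j for ρ < |z| < 1, where g° is the critical radial harmonic map of A(1, r₀) onto A(1, R). Then the Dirichlet energy of g⋄ equals 4πj² ∫₁^{r₀} G(t)²/t dt − 2πj² log(ρ·r₀), where G is the radial profile of g°. -/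
/-!
Since the right-hand side of the ODE is nonnegative, `G` is nondecreasing from `G 1 = 1`, so
`G ≥ 1` and the ODE gives `G'(t)² = j² (G(t)² - 1) / t²`. Hence on `1 ≤ t ≤ r₀` the energy
density of `g°` is `(2 G² - 1) j² / t²`, while that of `z^j/|z|^j` is `j² / t²`. After
multiplying by `2π t`, the `j²/t` parts integrate to `-2πj² log ρ` and `-2πj² log r₀`, which
add up to `-2πj² log (ρ r₀)`.
-/

open Real Set intervalIntegral

lemma integral_two_pi_mul_self_mul_div_sq {a b : ℝ} (ha : 0 < a) (hb : 0 < b) (c : ℝ) :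
    ∫ t in a..b, 2 * π * t * (c / t ^ 2) = 2 * π * c * log (b / a) := by
  have hcongr :
      EqOn (fun t => 2 * π * t * (c / t ^ 2)) (fun t => 2 * π * c * t⁻¹) (uIcc a b) := by
    intro t ht
    have ht0 : t ≠ 0 := fun h => notMem_uIcc_of_lt ha hb (h ▸ ht)
    field_simp
  rw [integral_congr hcongr, integral_const_mul, integral_inv_of_pos ha hb]

section RadialProfile

variable {G : ℝ → ℝ} {c b : ℝ}

lemma one_le_of_hasDerivAt_mul_sqrt_sq_sub_one (hc : 0 ≤ c) (hG1 : G 1 = 1)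
    (hode : ∀ t ∈ Icc 1 b, HasDerivAt G (c * √(G t ^ 2 - 1) / t) t) :
    ∀ t ∈ Icc 1 b, 1 ≤ G t := by
  have hmono : MonotoneOn G (Icc 1 b) := by
    refine monotoneOn_of_hasDerivWithinAt_nonneg (f' := fun t => c * √(G t ^ 2 - 1) / t)
      (convex_Icc 1 b) (fun t ht => (hode t ht).continuousAt.continuousWithinAt)
      (fun t ht => ?_) (fun t ht => ?_)
    all_goals rw [interior_Icc] at ht
    · exact (hode t (Ioo_subset_Icc_self ht)).hasDerivWithinAt
    · exact div_nonneg (mul_nonneg hc (sqrt_nonneg _)) (by linarith [ht.1])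
  intro t ht
  exact hG1 ▸ hmono (left_mem_Icc.2 (ht.1.trans ht.2)) ht ht.1

lemma two_pi_mul_radial_energy_density {t : ℝ} (ht : 0 < t) (hGt : 1 ≤ G t)
    (hderiv : HasDerivAt G (c * √(G t ^ 2 - 1) / t) t) :
    2 * π * t * (c ^ 2 * G t ^ 2 / t ^ 2 + deriv G t ^ 2)
      = 4 * π * c ^ 2 * (G t ^ 2 / t) - 2 * π * c ^ 2 * t⁻¹ := by
  have hsq : 0 ≤ G t ^ 2 - 1 := by nlinarith
  rw [hderiv.deriv, div_pow, mul_pow, sq_sqrt hsq]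
  field_simp
  ring

lemma integral_two_pi_mul_radial_energy_density (hb : 1 ≤ b) (hc : 0 ≤ c) (hG1 : G 1 = 1)
    (hode : ∀ t ∈ Icc 1 b, HasDerivAt G (c * √(G t ^ 2 - 1) / t) t) :
    ∫ t in (1 : ℝ)..b, 2 * π * t * (c ^ 2 * G t ^ 2 / t ^ 2 + deriv G t ^ 2)
      = 4 * π * c ^ 2 * (∫ t in (1 : ℝ)..b, G t ^ 2 / t) - 2 * π * c ^ 2 * log b := by
  have hpos : ∀ t ∈ uIcc 1 b, 0 < t := fun t ht => by
    rw [uIcc_of_le hb] at ht; linarith [ht.1]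
  have hGge := one_le_of_hasDerivAt_mul_sqrt_sq_sub_one hc hG1 hode
  have hcongr : EqOn (fun t => 2 * π * t * (c ^ 2 * G t ^ 2 / t ^ 2 + deriv G t ^ 2))
      (fun t => 4 * π * c ^ 2 * (G t ^ 2 / t) - 2 * π * c ^ 2 * t⁻¹) (uIcc 1 b) := by
    intro t ht
    have ht' : t ∈ Icc 1 b := uIcc_of_le hb ▸ ht
    exact two_pi_mul_radial_energy_density (hpos t ht) (hGge t ht') (hode t ht')
  have hGcont : ContinuousOn G (uIcc 1 b) := fun t ht =>
    (hode t (uIcc_of_le hb ▸ ht)).continuousAt.continuousWithinAt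
  have hquot : IntervalIntegrable (fun t => G t ^ 2 / t) MeasureTheory.volume 1 b :=
    ((hGcont.pow 2).div continuousOn_id fun t ht => (hpos t ht).ne').intervalIntegrable
  have hinv : IntervalIntegrable (fun t : ℝ => t⁻¹) MeasureTheory.volume 1 b :=
    intervalIntegrable_inv (fun t ht => (hpos t ht).ne') continuousOn_id
  rw [integral_congr hcongr, integral_sub (hquot.const_mul _) (hinv.const_mul _),
    integral_const_mul, integral_const_mul, integral_inv_of_pos one_pos (by linarith), div_one]

end RadialProfile

theorem stmt19_general (j : ℕ) (R r : ℝ) (hR : 1 < R)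
    (hr : (R + Real.sqrt (R ^ 2 - 1)) ^ ((1 : ℝ) / j) < r)
    (r₀ ρ : ℝ)
    (hr₀ : r₀ = (R + Real.sqrt (R ^ 2 - 1)) ^ ((1 : ℝ) / j))
    (hρ : ρ = r₀ / r)
    (G : ℝ → ℝ) (hG1 : G 1 = 1)
    (hode : ∀ t ∈ Set.Icc (1 : ℝ) r₀,
      HasDerivAt G ((j : ℝ) * Real.sqrt (G t ^ 2 - 1) / t) t) :
    (∫ t in ρ..(1 : ℝ), 2 * Real.pi * t * ((j ^ 2 : ℝ) / t ^ 2))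
        + (∫ t in (1 : ℝ)..r₀,
            2 * Real.pi * t * ((j ^ 2 : ℝ) * G t ^ 2 / t ^ 2 + (deriv G t) ^ 2))
      = 4 * Real.pi * (j ^ 2 : ℝ) * (∫ t in (1 : ℝ)..r₀, G t ^ 2 / t)
        - 2 * Real.pi * (j ^ 2 : ℝ) * Real.log (ρ * r₀) := by
  have hr₀_ge : 1 ≤ r₀ :=
    hr₀ ▸ one_le_rpow (by nlinarith [sqrt_nonneg (R ^ 2 - 1)]) (by positivity)
  have hρ_pos : 0 < ρ := hρ ▸ div_pos (by linarith) (by linarith)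
  rw [integral_two_pi_mul_self_mul_div_sq hρ_pos one_pos,
    integral_two_pi_mul_radial_energy_density hr₀_ge (Nat.cast_nonneg j) hG1 hode,
    log_mul hρ_pos.ne' (by linarith), one_div, log_inv]
  ring

theorem stmt19 (j : ℕ) (hj : 0 < j) (R r : ℝ) (hR : 1 < R)
    (hr : (R + Real.sqrt (R ^ 2 - 1)) ^ ((1 : ℝ) / j) < r)
    (r₀ ρ : ℝ)
    (hr₀ : r₀ = (R + Real.sqrt (R ^ 2 - 1)) ^ ((1 : ℝ) / j))
    (hρ : ρ = r₀ / r)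
    (G : ℝ → ℝ) (hG1 : G 1 = 1) (hGr₀ : G r₀ = R)
    (hode : ∀ t ∈ Set.Icc (1 : ℝ) r₀,
      HasDerivAt G ((j : ℝ) * Real.sqrt (G t ^ 2 - 1) / t) t) :
    (∫ t in ρ..(1 : ℝ), 2 * Real.pi * t * ((j ^ 2 : ℝ) / t ^ 2))
        + (∫ t in (1 : ℝ)..r₀,
            2 * Real.pi * t * ((j ^ 2 : ℝ) * G t ^ 2 / t ^ 2 + (deriv G t) ^ 2))
      = 4 * Real.pi * (j ^ 2 : ℝ) * (∫ t in (1 : ℝ)..r₀, G t ^ 2 / t)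
        - 2 * Real.pi * (j ^ 2 : ℝ) * Real.log (ρ * r₀) :=
  stmt19_general j R r hR hr r₀ ρ hr₀ hρ G hG1 hode
end
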